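/- arXiv:math/0501273 — 2 statements merged into one kernel-verified Lean document; each statement's English description precedes it below -/
import Mathlib

section
/- Let F be the free group on two generators x, y, and let R ⊆ F consist of the two elements (x*y*x)*(y*x*y)⁻¹ and (x*y)^6. Then there is a group isomorphism φ from the presented group ⟨x, y ∣ R⟩ to SL(2, ℤ) sending the class of x to A = !![1, 1; 0, 1] and the class of y to B = !![1, 0; -1, 1]. -/
/-- The matrix `!![1, 1; 0, 1]` as an element of `SL(2, ℤ)`. -/
def A : Matrix.SpecialLinearGroup (Fin 2) ℤ :=
  ⟨!![1, 1; 0, 1], by norm_num [Matrix.det_fin_two_of]⟩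

/-- The matrix `!![1, 0; -1, 1]` as an element of `SL(2, ℤ)`. -/
def B : Matrix.SpecialLinearGroup (Fin 2) ℤ :=
  ⟨!![1, 0; -1, 1], by norm_num [Matrix.det_fin_two_of]⟩

/-- The generator `x` of the free group on two generators. -/
def x : FreeGroup (Fin 2) := FreeGroup.of 0

/-- The generator `y` of the free group on two generators. -/
def y : FreeGroup (Fin 2) := FreeGroup.of 1

/-- The relations `(xyx)(yxy)⁻¹` and `(xy)^6` defining the mapping class group of the torus. -/
def rels : Set (FreeGroup (Fin 2)) :=
  {(x * y * x) * (y * x * y)⁻¹, (x * y) ^ 6}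

namespace SL2P

abbrev SL2Z := Matrix.SpecialLinearGroup (Fin 2) ℤ

-- matrix identities
lemma matAB : (A * B : SL2Z) = ⟨!![0,1;-1,1], by norm_num [Matrix.det_fin_two_of]⟩ := by
  ext i j
  simp only [Matrix.SpecialLinearGroup.coe_mul]
  fin_cases i <;> fin_cases j <;>
    simp [A, B, Matrix.SpecialLinearGroup.coe_mul, Matrix.mul_apply, Fin.sum_univ_two]

lemma braidAB : A * B * A = B * A * B := by
  ext i j
  simp only [Matrix.SpecialLinearGroup.coe_mul]
  fin_cases i <;> fin_cases j <;>
    simp [A, B, Matrix.SpecialLinearGroup.coe_mul, Matrix.mul_apply, Fin.sum_univ_two]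

lemma powAB6 : (A * B) ^ 6 = 1 := by
  ext i j
  simp only [Matrix.SpecialLinearGroup.coe_pow, Matrix.SpecialLinearGroup.coe_mul]
  fin_cases i <;> fin_cases j <;>
    simp [A, B, pow_succ, Matrix.SpecialLinearGroup.coe_mul, Matrix.mul_apply, Fin.sum_univ_two]

end SL2P
namespace SL2P
def toFun : Fin 2 → SL2Z := ![A, B]

lemma rels_one : ∀ r ∈ rels, FreeGroup.lift toFun r = 1 := by
  intro r hr
  rcases hr with h | h <;> subst h
  · simp only [map_mul, map_inv, FreeGroup.lift_apply_of, x, y, toFun]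
    simp only [Matrix.cons_val_zero, Matrix.cons_val_one, Matrix.head_cons]
    rw [mul_inv_eq_one, braidAB]
  · simp only [map_pow, map_mul, FreeGroup.lift_apply_of, x, y, toFun]
    simp only [Matrix.cons_val_zero, Matrix.cons_val_one, Matrix.head_cons]
    exact powAB6

def f : PresentedGroup rels →* SL2Z := PresentedGroup.toGroup rels_one

abbrev P := PresentedGroup rels
def a : P := PresentedGroup.of 0
def b : P := PresentedGroup.of 1

lemma fa : f a = A := PresentedGroup.toGroup.of rels_one
lemma fb : f b = B := PresentedGroup.toGroup.of rels_one

-- relations in P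
def mk : FreeGroup (Fin 2) →* P := QuotientGroup.mk' _

lemma mk_rel {r : FreeGroup (Fin 2)} (hr : r ∈ rels) : mk r = 1 := by
  have : r ∈ Subgroup.normalClosure rels := Subgroup.subset_normalClosure hr
  exact (QuotientGroup.eq_one_iff r).mpr this

lemma braid : a * b * a = b * a * b := by
  have := mk_rel (r := (x * y * x) * (y * x * y)⁻¹) (Or.inl rfl)
  have h2 : mk (x*y*x) * (mk (y*x*y))⁻¹ = 1 := by simpa using this
  rw [mul_inv_eq_one] at h2
  simp [x, y, mk] at h2; exact h2
lemma rel6 : (a * b) ^ 6 = 1 := by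
  have := mk_rel (r := (x * y) ^ 6) (Or.inr rfl)
  simp [x, y, mk] at this; exact this


def z : P := (a*b)^3
def s : P := a*b*a

lemma pow3 (g : P) : g^3 = g*g*g := by
  rw [pow_succ, pow_succ, pow_one]

lemma zz : z * z = 1 := by
  have := rel6
  rw [show (6:ℕ) = 3*2 by norm_num, pow_mul] at this
  simpa [z, sq] using this

lemma ss : s * s = z := by
  show (a*b*a) * (a*b*a) = z
  nth_rewrite 2 [braid]
  rw [z, pow3]
  group

lemma zba : (b*a)^3 = z := by
  calc (b*a)^3 = (b*a*b)*(a*b*a) := by rw [pow3]; group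
    _ = (a*b*a)*(a*b*a) := by rw [braid]
    _ = z := ss

lemma za : z * a = a * z := by
  calc z * a = (a*b)^3 * a := rfl
    _ = a * (b*a)^3 := by rw [pow3, pow3]; group
    _ = a * z := by rw [zba]

lemma zb : z * b = b * z := by
  have h : b * z = z * b := by
    calc b * z = b * (a*b)^3 := rfl
      _ = (b*a)^3 * b := by rw [pow3, pow3]; group
      _ = z * b := by rw [zba]
  exact h.symm

lemma z_comm (p : P) : z * p = p * z := by
  have hp : p ∈ Subgroup.centralizer ({z} : Set P) := by
    have htop : Subgroup.closure (Set.range (PresentedGroup.of (rels := rels))) = ⊤ :=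
      PresentedGroup.closure_range_of rels
    have hmem : p ∈ Subgroup.closure (Set.range (PresentedGroup.of (rels := rels))) := by
      rw [htop]; trivial
    refine Subgroup.closure_le (Subgroup.centralizer {z}) |>.mpr ?_ hmem
    rintro q ⟨i, rfl⟩
    rw [SetLike.mem_coe, Subgroup.mem_centralizer_iff]
    intro g hg
    rw [Set.mem_singleton_iff] at hg
    subst hg
    fin_cases i
    · exact za
    · exact zb
  have := Subgroup.mem_centralizer_iff.mp hp z (Set.mem_singleton z)
  exact this

lemma sa : s * a = b * s := by
  calc s * a = (a*b*a)*a := rfl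
    _ = (b*a*b)*a := by rw [braid]
    _ = b * s := by rw [s]; group

lemma sb : s * b = a * s := by
  calc s * b = a*(b*a*b) := by rw [s]; group
    _ = a*(a*b*a) := by rw [braid]
    _ = a * s := rfl

lemma sainv : s * a⁻¹ = b⁻¹ * s := by
  have h := sa
  calc s * a⁻¹ = b⁻¹ * (b * s) * a⁻¹ := by group
    _ = b⁻¹ * (s * a) * a⁻¹ := by rw [h]
    _ = b⁻¹ * s := by group

lemma sbinv : s * b⁻¹ = a⁻¹ * s := by
  have h := sb
  calc s * b⁻¹ = a⁻¹ * (a * s) * b⁻¹ := by group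
    _ = a⁻¹ * (s * b) * b⁻¹ := by rw [h]
    _ = a⁻¹ * s := by group

lemma zinv : z⁻¹ = z := by
  rw [inv_eq_iff_mul_eq_one]; exact zz

lemma b_eq : b = z * (s * (a * s)) := by
  have h : s * a * s = b * z := by rw [sa, mul_assoc, ss]
  calc b = b * z * z := by rw [mul_assoc, zz, mul_one]
    _ = (s * a * s) * z := by rw [h]
    _ = z * (s * (a * s)) := by rw [← z_comm]; group

lemma ainv_eq : a⁻¹ = z * (s * (b⁻¹ * s)) := by
  have h : s * b⁻¹ * s = a⁻¹ * z := by rw [sbinv, mul_assoc, ss]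
  calc a⁻¹ = a⁻¹ * z * z := by rw [mul_assoc, zz, mul_one]
    _ = (s * b⁻¹ * s) * z := by rw [h]
    _ = z * (s * (b⁻¹ * s)) := by rw [← z_comm]; group

lemma binvainv : b⁻¹ * a⁻¹ = z * (a * s) := by
  have h : (a*b) * (a * s) = z := by
    calc (a*b) * (a * s) = (a*b)*(a*(a*b*a)) := rfl
      _ = (a*b)*(a*(b*a*b)) := by rw [braid]
      _ = (a*b)^3 := by rw [pow3]; group
      _ = z := rfl
  have h2 : (a*b)⁻¹ = (a*s) * z⁻¹ := by rw [← h]; group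
  calc b⁻¹ * a⁻¹ = (a*b)⁻¹ := by group
    _ = (a*s) * z⁻¹ := h2
    _ = (a*s) * z := by rw [zinv]
    _ = z * (a*s) := (z_comm _).symm

lemma ab_eq : a * b = b⁻¹ * s := by
  have h : b * (a * b) = s := by
    calc b * (a*b) = b*a*b := by group
      _ = a*b*a := (braid).symm
      _ = s := rfl
  calc a * b = b⁻¹ * (b * (a*b)) := by group
    _ = b⁻¹ * s := by rw [h]

def gen (t : Bool) : P := if t then a else b⁻¹
def E (w : List Bool) : P := (w.map gen).prod

lemma E_nil : E [] = 1 := rfl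
lemma E_concat (w : List Bool) (t : Bool) : E (w ++ [t]) = E w * gen t := by
  simp [E]

def st (j : Bool) : P := if j then s else 1

def InH (p : P) : Prop := ∃ (i : ℕ) (j k : Bool) (w : List Bool), p = z^i * st j * E w * st k

lemma InH_one : InH 1 := ⟨0, false, false, [], by simp [st, E]⟩

lemma InH_mul_s {p} (h : InH p) : InH (p * s) := by
  obtain ⟨i, j, k, w, rfl⟩ := h
  cases k
  · exact ⟨i, j, true, w, by simp [st]⟩
  · refine ⟨i+1, j, false, w, ?_⟩
    simp only [st, Bool.false_eq_true, eq_self_iff_true, if_true, if_false, mul_one]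
    calc z^i * (if j then s else 1) * E w * s * s
        = z^i * (if j then s else 1) * (E w * z) := by rw [mul_assoc, mul_assoc, ss]
      _ = z^i * (if j then s else 1) * (z * E w) := by rw [← z_comm (E w)]
      _ = z^i * ((if j then s else 1) * z) * E w := by group
      _ = z^i * (z * (if j then s else 1)) * E w := by rw [← z_comm]
      _ = z^(i+1) * (if j then s else 1) * E w := by rw [pow_succ]; group

lemma core0 (i : ℕ) (j : Bool) (w : List Bool) (g : P)
    (hg : g = a ∨ g = b ∨ g = a⁻¹ ∨ g = b⁻¹) :
    InH (z^i * st j * E w * g) := by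
  rcases hg with rfl | rfl | rfl | rfl
  · exact ⟨i, j, false, w ++ [true], by simp [E_concat, gen, st, mul_assoc]⟩
  · -- g = b
    rcases w.eq_nil_or_concat with rfl | ⟨w₀, t, rfl⟩

    · cases j
      · refine ⟨i+1, true, true, [true], ?_⟩
        simp only [st, Bool.false_eq_true, eq_self_iff_true, if_true, if_false, mul_one, E_nil, E, List.map, List.prod_cons,
          List.prod_nil, gen]
        rw [b_eq, pow_succ]; group
      · refine ⟨i+2, false, true, [true], ?_⟩
        simp only [st, Bool.false_eq_true, eq_self_iff_true, if_true, if_false, mul_one, E_nil, E, List.map, List.prod_cons,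
          List.prod_nil, gen]
        calc z^i * s * b = z^i * s * (z * (s * (a * s))) := by rw [← b_eq]
          _ = z^i * (s * z) * (s * (a * s)) := by group
          _ = z^i * (z * s) * (s * (a * s)) := by rw [← z_comm s]
          _ = z^(i+1) * (s * s) * (a * s) := by rw [pow_succ]; group
          _ = z^(i+1) * z * (a * s) := by rw [ss]
          _ = z^(i+2) * a * s := by rw [pow_succ]; group
    · cases t
      · exact ⟨i, j, false, w₀, by rw [List.concat_eq_append, E_concat]; simp only [Bool.false_eq_true, eq_self_iff_true, if_true, if_false, gen, if_false, st]; group⟩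
      · refine ⟨i, j, true, w₀ ++ [false], ?_⟩
        rw [List.concat_eq_append, E_concat, E_concat]
        simp only [Bool.false_eq_true, eq_self_iff_true, if_true, if_false, gen, st]
        calc z^i * st j * (E w₀ * a) * b = z^i * st j * E w₀ * (a * b) := by group
          _ = z^i * st j * E w₀ * (b⁻¹ * s) := by rw [ab_eq]
          _ = z^i * st j * (E w₀ * b⁻¹) * s := by group
  · -- g = a⁻¹
    rcases w.eq_nil_or_concat with rfl | ⟨w₀, t, rfl⟩

    · cases j
      · refine ⟨i+1, true, true, [false], ?_⟩
        simp only [st, Bool.false_eq_true, eq_self_iff_true, if_true, if_false, mul_one, E_nil, E, List.map, List.prod_cons,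
          List.prod_nil, gen]
        rw [ainv_eq, pow_succ]; group
      · refine ⟨i+2, false, true, [false], ?_⟩
        simp only [st, Bool.false_eq_true, eq_self_iff_true, if_true, if_false, mul_one, E_nil, E, List.map, List.prod_cons,
          List.prod_nil, gen]
        calc z^i * s * a⁻¹ = z^i * s * (z * (s * (b⁻¹ * s))) := by rw [← ainv_eq]
          _ = z^i * (s * z) * (s * (b⁻¹ * s)) := by group
          _ = z^i * (z * s) * (s * (b⁻¹ * s)) := by rw [← z_comm s]
          _ = z^(i+1) * (s * s) * (b⁻¹ * s) := by rw [pow_succ]; group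
          _ = z^(i+1) * z * (b⁻¹ * s) := by rw [ss]
          _ = z^(i+2) * b⁻¹ * s := by rw [pow_succ]; group
    · cases t
      · refine ⟨i+1, j, true, w₀ ++ [true], ?_⟩
        rw [List.concat_eq_append, E_concat, E_concat]
        simp only [Bool.false_eq_true, eq_self_iff_true, if_true, if_false, gen, st]
        calc z^i * st j * (E w₀ * b⁻¹) * a⁻¹ = z^i * st j * (E w₀ * (b⁻¹ * a⁻¹)) := by group
          _ = z^i * st j * (E w₀ * (z * (a * s))) := by rw [binvainv]
          _ = z^i * st j * ((E w₀ * z) * (a * s)) := by group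
          _ = z^i * st j * ((z * E w₀) * (a * s)) := by rw [← z_comm (E w₀)]
          _ = z^i * (st j * z) * (E w₀ * (a * s)) := by group
          _ = z^i * (z * st j) * (E w₀ * (a * s)) := by rw [← z_comm (st j)]
          _ = z^(i+1) * st j * (E w₀ * a) * s := by rw [pow_succ]; group
      · exact ⟨i, j, false, w₀, by rw [List.concat_eq_append, E_concat]; simp only [Bool.false_eq_true, eq_self_iff_true, if_true, if_false, gen, if_true, st]; group⟩
  · exact ⟨i, j, false, w ++ [false], by simp [E_concat, gen, st, mul_assoc]⟩

lemma InH_mul_gen {p : P} (h : InH p) (g : P)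
    (hg : g = a ∨ g = b ∨ g = a⁻¹ ∨ g = b⁻¹) : InH (p * g) := by
  obtain ⟨i, j, k, w, rfl⟩ := h
  cases k
  · have : z^i * st j * E w * st false * g = z^i * st j * E w * g := by
      simp [st]
    rw [this]
    exact core0 i j w g hg
  · have hswap : ∃ g', (g' = a ∨ g' = b ∨ g' = a⁻¹ ∨ g' = b⁻¹) ∧ s * g = g' * s := by
      rcases hg with rfl | rfl | rfl | rfl
      · exact ⟨b, by tauto, sa⟩
      · exact ⟨a, by tauto, sb⟩
      · exact ⟨b⁻¹, by tauto, sainv⟩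
      · exact ⟨a⁻¹, by tauto, sbinv⟩
    obtain ⟨g', hg', hsg⟩ := hswap
    have : z^i * st j * E w * st true * g = (z^i * st j * E w * g') * s := by
      simp only [st, if_true]
      rw [mul_assoc _ s g, hsg]
      group
    rw [this]
    exact InH_mul_s (core0 i j w g' hg')

lemma InH_all (p : P) : InH p := by
  have hrange : Set.range (PresentedGroup.of (rels := rels)) = {a, b} := by
    ext q
    constructor
    · rintro ⟨i, rfl⟩; fin_cases i
      · exact Or.inl rfl
      · exact Or.inr rfl
    · rintro (rfl | rfl)
      · exact ⟨0, rfl⟩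
      · exact ⟨1, rfl⟩
  have htop : Subgroup.closure ({a, b} : Set P) = ⊤ := by
    rw [← hrange]; exact PresentedGroup.closure_range_of rels
  have hmem : p ∈ Submonoid.closure (({a, b} : Set P) ∪ ({a, b} : Set P)⁻¹) := by
    rw [← Subgroup.closure_toSubmonoid, htop]
    trivial
  have key : ∀ q, InH q → InH (q * p) := by
    refine Submonoid.closure_induction (motive := fun p _ => ∀ q, InH q → InH (q * p)) ?_ ?_ ?_ hmem
    · rintro g (hg | hg) q hq
      · refine InH_mul_gen hq g ?_
        rcases hg with rfl | rfl
        · tauto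
        · simp only [Set.mem_singleton_iff] at *; tauto
      · rw [Set.mem_inv] at hg
        refine InH_mul_gen hq g ?_
        rcases hg with h | h
        · right; right; left; rw [← h, inv_inv]
        · rw [Set.mem_singleton_iff] at h
          right; right; right; rw [← h, inv_inv]
    · intro q hq; simpa using hq
    · intro p₁ p₂ _ _ h1 h2 q hq
      rw [← mul_assoc]
      exact h2 _ (h1 _ hq)
  simpa using key 1 InH_one

def Sm : SL2Z := ⟨!![0,1;-1,0], by norm_num [Matrix.det_fin_two_of]⟩
def Nm : SL2Z := ⟨!![-1,0;0,-1], by norm_num [Matrix.det_fin_two_of]⟩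
def L : SL2Z := ⟨!![1,0;1,1], by norm_num [Matrix.det_fin_two_of]⟩

lemma fs : f s = Sm := by
  show f (a*b*a) = Sm
  rw [map_mul, map_mul, fa, fb]
  ext i j
  simp only [Matrix.SpecialLinearGroup.coe_mul]
  fin_cases i <;> fin_cases j <;>
    simp [A, B, Sm, Matrix.SpecialLinearGroup.coe_mul, Matrix.mul_apply, Fin.sum_univ_two]

lemma fz : f z = Nm := by
  show f ((a*b)^3) = Nm
  rw [map_pow, map_mul, fa, fb]
  ext i j
  simp only [Matrix.SpecialLinearGroup.coe_pow, Matrix.SpecialLinearGroup.coe_mul]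
  fin_cases i <;> fin_cases j <;>
    simp [A, B, Nm, pow_succ, Matrix.SpecialLinearGroup.coe_mul, Matrix.mul_apply,
      Fin.sum_univ_two]

lemma Binv : B⁻¹ = L := by
  rw [inv_eq_iff_mul_eq_one]
  ext i j
  simp only [Matrix.SpecialLinearGroup.coe_mul]
  fin_cases i <;> fin_cases j <;>
    simp [B, L, Matrix.SpecialLinearGroup.coe_mul, Matrix.mul_apply, Fin.sum_univ_two]

def Inv (M : Matrix (Fin 2) (Fin 2) ℤ) : Prop :=
  1 ≤ M 0 0 ∧ 0 ≤ M 0 1 ∧ 0 ≤ M 1 0 ∧ 1 ≤ M 1 1 ∧ 1 ≤ M 0 1 + M 1 0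

lemma inv_A : Inv (A : Matrix (Fin 2) (Fin 2) ℤ) := by
  refine ⟨?_, ?_, ?_, ?_, ?_⟩ <;> simp [A]

lemma inv_L : Inv (L : Matrix (Fin 2) (Fin 2) ℤ) := by
  refine ⟨?_, ?_, ?_, ?_, ?_⟩ <;> simp [L]

lemma inv_mul_A {V : Matrix (Fin 2) (Fin 2) ℤ} (h : Inv V) : Inv ((A : Matrix (Fin 2) (Fin 2) ℤ) * V) := by
  obtain ⟨h1, h2, h3, h4, h5⟩ := h
  refine ⟨?_, ?_, ?_, ?_, ?_⟩ <;>
    simp [A, Matrix.mul_apply, Fin.sum_univ_two] <;> linarith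

lemma inv_mul_L {V : Matrix (Fin 2) (Fin 2) ℤ} (h : Inv V) : Inv ((L : Matrix (Fin 2) (Fin 2) ℤ) * V) := by
  obtain ⟨h1, h2, h3, h4, h5⟩ := h
  refine ⟨?_, ?_, ?_, ?_, ?_⟩ <;>
    simp [L, Matrix.mul_apply, Fin.sum_univ_two] <;> linarith

lemma inv_E : ∀ (w : List Bool), w ≠ [] → Inv ((f (E w) : Matrix (Fin 2) (Fin 2) ℤ)) := by
  intro w
  induction w with
  | nil => intro h; exact absurd rfl h
  | cons t w' ih =>
    intro _
    have hE : E (t :: w') = gen t * E w' := by simp [E]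
    rw [hE, map_mul]
    rcases eq_or_ne w' [] with rfl | hne
    · cases t
      · simp only [E_nil, map_one, mul_one, gen, Bool.false_eq_true, if_false]
        rw [map_inv, fb, Binv]; exact inv_L
      · simp only [E_nil, map_one, mul_one, gen, if_true]
        rw [fa]; exact inv_A
    · have hV := ih hne
      cases t
      · have : f (gen false) = L := by simp only [gen]; rw [if_neg (by simp), map_inv, fb, Binv]
        rw [this, Matrix.SpecialLinearGroup.coe_mul]
        exact inv_mul_L hV
      · have : f (gen true) = A := by simp only [gen, if_true]; exact fa
        rw [this, Matrix.SpecialLinearGroup.coe_mul]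
        exact inv_mul_A hV

lemma z_pow_parity (i : ℕ) : z^i = 1 ∨ z^i = z := by
  rcases Nat.even_or_odd i with ⟨m, rfl⟩ | ⟨m, rfl⟩
  · left
    have : m + m = 2 * m := by ring
    rw [this, pow_mul, pow_two, zz, one_pow]
  · right
    have h2 : z^(2*m) = 1 := by rw [pow_mul, pow_two, zz, one_pow]
    rw [pow_succ, h2, one_mul]

theorem f_inj : Function.Injective f := by
  rw [injective_iff_map_eq_one]
  intro p hp
  obtain ⟨i, j, k, w, rfl⟩ := InH_all p
  rcases z_pow_parity i with hz | hz <;> rw [hz] at hp ⊢ <;>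
    rcases eq_or_ne w [] with rfl | hw
  -- z^i = 1, w = []
  · rw [E_nil] at hp ⊢
    cases j <;> cases k <;>
      simp only [st, Bool.false_eq_true, eq_self_iff_true, if_true, if_false, one_mul,
        mul_one] at hp ⊢
    · exfalso
      rw [fs] at hp
      have h01 := congrFun (congrFun (congrArg Subtype.val hp) 0) 1
      simp [Sm, Matrix.one_apply] at h01
    · exfalso
      rw [fs] at hp
      have h01 := congrFun (congrFun (congrArg Subtype.val hp) 0) 1
      simp [Sm, Matrix.one_apply] at h01
    · exfalso
      rw [map_mul, fs] at hp
      have h00 := congrFun (congrFun (congrArg Subtype.val hp) 0) 0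
      simp only [Matrix.SpecialLinearGroup.coe_mul] at h00
      simp [Sm, Matrix.mul_apply, Matrix.vecMul, dotProduct, Fin.sum_univ_two,
        Matrix.one_apply] at h00
  -- z^i = 1, w ≠ []
  · exfalso
    obtain ⟨i1, i2, i3, i4, i5⟩ := inv_E w hw
    cases j <;> cases k <;>
      simp only [st, Bool.false_eq_true, eq_self_iff_true, if_true, if_false, one_mul,
        mul_one] at hp
    · have h01 := congrFun (congrFun (congrArg Subtype.val hp) 0) 1
      have h10 := congrFun (congrFun (congrArg Subtype.val hp) 1) 0
      simp [Matrix.one_apply] at h01 h10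
      linarith
    · rw [map_mul, fs] at hp
      have h00 := congrFun (congrFun (congrArg Subtype.val hp) 0) 0
      simp only [Matrix.SpecialLinearGroup.coe_mul] at h00
      simp [Sm, Matrix.mul_apply, Matrix.vecMul, dotProduct, Fin.sum_univ_two,
        Matrix.one_apply] at h00
      linarith
    · rw [map_mul, fs] at hp
      have h10 := congrFun (congrFun (congrArg Subtype.val hp) 1) 0
      simp only [Matrix.SpecialLinearGroup.coe_mul] at h10
      simp [Sm, Matrix.mul_apply, Matrix.vecMul, dotProduct, Fin.sum_univ_two,
        Matrix.one_apply] at h10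
      linarith
    · rw [map_mul, map_mul, fs] at hp
      have h00 := congrFun (congrFun (congrArg Subtype.val hp) 0) 0
      simp only [Matrix.SpecialLinearGroup.coe_mul] at h00
      simp [Sm, Matrix.mul_apply, Matrix.vecMul, dotProduct, Fin.sum_univ_two,
        Matrix.one_apply] at h00
      linarith
  -- z^i = z, w = []
  · rw [E_nil] at hp ⊢
    cases j <;> cases k <;>
      simp only [st, Bool.false_eq_true, eq_self_iff_true, if_true, if_false, one_mul,
        mul_one] at hp ⊢
    · exfalso
      rw [fz] at hp
      have h00 := congrFun (congrFun (congrArg Subtype.val hp) 0) 0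
      simp [Nm, Matrix.one_apply] at h00
    · exfalso
      rw [map_mul, fz, fs] at hp
      have h00 := congrFun (congrFun (congrArg Subtype.val hp) 0) 0
      simp only [Matrix.SpecialLinearGroup.coe_mul] at h00
      simp [Nm, Sm, Matrix.mul_apply, Matrix.vecMul, dotProduct, Fin.sum_univ_two,
        Matrix.one_apply] at h00
    · exfalso
      rw [map_mul, fz, fs] at hp
      have h00 := congrFun (congrFun (congrArg Subtype.val hp) 0) 0
      simp only [Matrix.SpecialLinearGroup.coe_mul] at h00
      simp [Nm, Sm, Matrix.mul_apply, Matrix.vecMul, dotProduct, Fin.sum_univ_two,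
        Matrix.one_apply] at h00
    · rw [mul_assoc, ss, zz]
  -- z^i = z, w ≠ []
  · exfalso
    obtain ⟨i1, i2, i3, i4, i5⟩ := inv_E w hw
    cases j <;> cases k <;>
      simp only [st, Bool.false_eq_true, eq_self_iff_true, if_true, if_false, one_mul,
        mul_one] at hp
    · rw [map_mul, fz] at hp
      have h00 := congrFun (congrFun (congrArg Subtype.val hp) 0) 0
      simp only [Matrix.SpecialLinearGroup.coe_mul] at h00
      simp [Nm, Matrix.mul_apply, Matrix.vecMul, dotProduct, Fin.sum_univ_two,
        Matrix.one_apply] at h00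
      linarith
    · rw [map_mul, map_mul, fz, fs] at hp
      have h01 := congrFun (congrFun (congrArg Subtype.val hp) 0) 1
      simp only [Matrix.SpecialLinearGroup.coe_mul] at h01
      simp [Nm, Sm, Matrix.mul_apply, Matrix.vecMul, dotProduct, Fin.sum_univ_two,
        Matrix.one_apply] at h01
      linarith
    · rw [map_mul, map_mul, fz, fs] at hp
      have h00 := congrFun (congrFun (congrArg Subtype.val hp) 0) 0
      simp only [Matrix.SpecialLinearGroup.coe_mul] at h00
      simp [Nm, Sm, Matrix.mul_apply, Matrix.vecMul, dotProduct, Fin.sum_univ_two,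
        Matrix.one_apply] at h00
      linarith
    · rw [map_mul, map_mul, map_mul, fz, fs] at hp
      have h01 := congrFun (congrFun (congrArg Subtype.val hp) 0) 1
      have h10 := congrFun (congrFun (congrArg Subtype.val hp) 1) 0
      simp only [Matrix.SpecialLinearGroup.coe_mul] at h01 h10
      simp [Nm, Sm, Matrix.mul_apply, Matrix.vecMul, dotProduct, Fin.sum_univ_two,
        Matrix.one_apply] at h01 h10
      linarith

lemma AT : A = ModularGroup.T := Subtype.ext rfl

lemma T_mem : ModularGroup.T ∈ f.range := by rw [← AT]; exact ⟨a, fa⟩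
lemma Sm_mem : Sm ∈ f.range := ⟨s, fs⟩

lemma f_surj : Function.Surjective f := by
  suffices h : ∀ n : ℕ, ∀ M : SL2Z, (M.1 1 0).natAbs = n → M ∈ f.range by
    intro M
    exact h _ M rfl
  intro n
  induction n using Nat.strong_induction_on with
  | _ n ih =>
    intro M hn
    rcases eq_or_ne (M.1 1 0) 0 with hc | hc
    · have hdet : M.1.det = 1 := M.2
      rw [Matrix.det_fin_two, hc, mul_zero, sub_zero] at hdet
      rcases Int.mul_eq_one_iff_eq_one_or_neg_one.mp hdet with ⟨h1, h2⟩ | ⟨h1, h2⟩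
      · have hM : M = ModularGroup.T ^ (M.1 0 1) := by
          apply Subtype.ext
          rw [ModularGroup.coe_T_zpow]
          ext i j
          fin_cases i <;> fin_cases j <;> simp [h1, h2, hc]
        rw [hM]
        exact zpow_mem T_mem _
      · have hM : M = f z * ModularGroup.T ^ (-(M.1 0 1)) := by
          rw [fz]
          apply Subtype.ext
          rw [Matrix.SpecialLinearGroup.coe_mul, ModularGroup.coe_T_zpow]
          ext i j
          fin_cases i <;> fin_cases j <;>
            simp [Nm, Matrix.mul_apply, Fin.sum_univ_two, h1, h2, hc]
        rw [hM]
        exact mul_mem ⟨z, rfl⟩ (zpow_mem T_mem _)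
    · set c := M.1 1 0 with hcdef
      set q := M.1 0 0 / c with hq
      set M' := Sm * (ModularGroup.T ^ (-q) * M) with hM'
      have h10 : M'.1 1 0 = -(M.1 0 0 % c) := by
        rw [hM', Matrix.SpecialLinearGroup.coe_mul, Matrix.SpecialLinearGroup.coe_mul,
          ModularGroup.coe_T_zpow, Int.emod_def]
        simp [Sm, Matrix.mul_apply, Matrix.vecMul, dotProduct, Fin.sum_univ_two]
        ring
      have hlt : (M'.1 1 0).natAbs < n := by
        rw [h10, Int.natAbs_neg, ← hn]
        have hr0 : 0 ≤ M.1 0 0 % c := Int.emod_nonneg _ hc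
        have hrlt : M.1 0 0 % c < |c| := by
          rw [← Int.emod_abs]; exact Int.emod_lt_of_pos _ (abs_pos.mpr hc)
        have := Int.natAbs_lt_natAbs_of_nonneg_of_lt hr0 hrlt
        simpa [Int.natAbs_abs] using this
      have hm' := ih _ hlt M' rfl
      have hM : M = ModularGroup.T ^ q * (Sm⁻¹ * M') := by
        rw [hM']
        group
      rw [hM]
      exact mul_mem (zpow_mem T_mem _) (mul_mem (inv_mem Sm_mem) hm')

end SL2P

/-- The presented group `⟨x, y ∣ xyx = yxy, (xy)^6 = 1⟩` is isomorphic to `SL(2, ℤ)`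
via `x ↦ A`, `y ↦ B`. -/
theorem presentedGroup_iso_SL2Z :
    ∃ φ : PresentedGroup rels ≃* Matrix.SpecialLinearGroup (Fin 2) ℤ,
      φ (PresentedGroup.of 0) = A ∧ φ (PresentedGroup.of 1) = B := by
  refine ⟨MulEquiv.ofBijective SL2P.f ⟨SL2P.f_inj, SL2P.f_surj⟩, ?_, ?_⟩
  · exact SL2P.fa
  · exact SL2P.fb
end

section
/- Let A = !![1, 1; 0, 1] and B = !![1, 0; -1, 1] be elements of the special linear group SL(2, ℤ). Then (A * B)^12 = A^4 * B * A^2 * B^2 * A^2 * B^2 * A^4 * B * A^2 * B^2 * A^2; equivalently, A^4 * B * A^2 * B^2 * A^2 * B^2 * A^4 * B * A^2 * B^2 * A^2 = 1. -/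
/-- The monodromy word `(ab)^12` of a genus-1 Lefschetz fibration on the K3 surface is
equivalent to `a^4 b a^2 b^2 a^2 b^2 a^4 b a^2 b^2 a^2`; equivalently, the latter word
maps to the identity matrix in `SL(2, ℤ)`. -/
theorem monodromy_word :
    (A * B) ^ 12 =
      A ^ 4 * B * A ^ 2 * B ^ 2 * A ^ 2 * B ^ 2 * A ^ 4 * B * A ^ 2 * B ^ 2 * A ^ 2 ∧
    A ^ 4 * B * A ^ 2 * B ^ 2 * A ^ 2 * B ^ 2 * A ^ 4 * B * A ^ 2 * B ^ 2 * A ^ 2 = 1 := by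
  have h : A ^ 4 * B * A ^ 2 * B ^ 2 * A ^ 2 * B ^ 2 * A ^ 4 * B * A ^ 2 * B ^ 2 * A ^ 2 = 1 := by
    ext i j
    simp only [A, B]
    fin_cases i <;> fin_cases j <;>
      simp [pow_succ, Matrix.mul_fin_two, Matrix.SpecialLinearGroup.coe_mul,
        Matrix.SpecialLinearGroup.coe_pow] <;> rfl
  have h12 : (A * B) ^ 12 = 1 := by
    ext i j
    simp only [A, B]
    fin_cases i <;> fin_cases j <;>
      simp [pow_succ, Matrix.mul_fin_two, Matrix.SpecialLinearGroup.coe_mul,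
        Matrix.SpecialLinearGroup.coe_pow] <;> rfl
  exact ⟨h12.trans h.symm, h⟩
end
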